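/- The weighted Myerson value satisfies the recursion: for every network g, value function v, positive weights w, and i ∈ N(g), Y_i^{w-MV}(g,v) = (1/Σ_{j∈N(g)} w_j) [ w_i (v(g) − v(g \ g_i)) + Σ_{j∈N(g), j≠i} w_j Y_i^{w-MV}(g \ g_j, v) ]. -/

import Mathlib

open Finset

variable {n : ℕ}

/-- A network on player set `Fin n`: a finite set of (unordered) links. -/
abbrev Network (n : ℕ) := Finset (Sym2 (Fin n))

/-- The set of non-isolated players of a network. -/
def players (g : Network n) : Finset (Fin n) :=
  Finset.univ.filter (fun i => ∃ e ∈ g, i ∈ e)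

/-- Harsanyi dividend of a value function at a network. -/
noncomputable def dividend (v : Network n → ℝ) (g' : Network n) : ℝ :=
  ∑ g'' ∈ g'.powerset, (-1 : ℝ) ^ (g'.card - g''.card) * v g''

/-- The weighted Myerson value. -/
noncomputable def wMV (w : Fin n → ℝ) (v : Network n → ℝ) (g : Network n) (i : Fin n) : ℝ :=
  ∑ g' ∈ g.powerset.filter (fun g' => i ∈ players g'),
    (w i / ∑ j ∈ players g', w j) * dividend v g'

/-- Connectivity of two players through links of `g`. -/
def connectedIn (g : Network n) (i j : Fin n) : Prop :=
  Relation.ReflTransGen (fun a b => s(a, b) ∈ g) i j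

open Classical in
/-- The component of `g` containing the link `e`. -/
noncomputable def component (g : Network n) (e : Sym2 (Fin n)) : Network n :=
  g.filter (fun e' => ∃ i ∈ e, ∃ j ∈ e', connectedIn g i j)

/-- The set of components (maximal connected subnetworks) of `g`. -/
noncomputable def components (g : Network n) : Finset (Network n) :=
  g.image (component g)

/-- Component additive value functions. -/
def componentAdditive (v : Network n → ℝ) : Prop :=
  ∀ g : Network n, v g = ∑ h ∈ components g, v h

open Classical in
/-- The restriction `g|_S` of a network to a coalition `S`. -/
noncomputable def restrict (g : Network n) (S : Finset (Fin n)) : Network n :=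
  g.filter (fun e => ∀ i ∈ e, i ∈ S)

/-- The set `g_i` of links of player `i` in `g`. -/
def glinks (g : Network n) (i : Fin n) : Network n :=
  g.filter (fun e => i ∈ e)


section Aux
open Classical

lemma players_mono {g g' : Network n} (h : g' ⊆ g) : players g' ⊆ players g := by
  intro x hx
  simp only [players, mem_filter, mem_univ, true_and] at hx ⊢
  obtain ⟨e, he, hxe⟩ := hx
  exact ⟨e, h he, hxe⟩

lemma wsum_pos (w : Fin n → ℝ) (hw : ∀ k, 0 < w k) {g : Network n} {i : Fin n}
    (hi : i ∈ players g) : 0 < ∑ j ∈ players g, w j :=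
  Finset.sum_pos (fun j _ => hw j) ⟨i, hi⟩

lemma powerset_sdiff_glinks (g : Network n) (j : Fin n) :
    (g \ glinks g j).powerset = g.powerset.filter (fun g' => j ∉ players g') := by
  ext g'
  simp only [mem_powerset, mem_filter, players, glinks, mem_univ, true_and]
  constructor
  · intro h
    refine ⟨h.trans sdiff_subset, ?_⟩
    rintro ⟨e, he, hje⟩
    have := h he
    simp only [mem_sdiff, Finset.mem_filter] at this
    exact this.2 ⟨this.1, hje⟩
  · rintro ⟨hsub, hnp⟩ e he
    simp only [mem_sdiff, Finset.mem_filter]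
    exact ⟨hsub he, fun hc => hnp ⟨e, he, hc.2⟩⟩

lemma inner_alt (g g'' : Network n) (h : g'' ⊆ g) :
    ∑ g' ∈ g.powerset.filter (fun g' => g'' ⊆ g'), (-1 : ℝ) ^ (g'.card - g''.card)
      = if g'' = g then 1 else 0 := by
  have key : ∑ g' ∈ g.powerset.filter (fun g' => g'' ⊆ g'), (-1 : ℝ) ^ (g'.card - g''.card)
      = ∑ t ∈ (g \ g'').powerset, (-1 : ℝ) ^ t.card := by
    refine Finset.sum_bij' (fun g' _ => g' \ g'') (fun t _ => g'' ∪ t) ?_ ?_ ?_ ?_ ?_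
    · intro a ha
      simp only [mem_filter, mem_powerset] at ha
      exact mem_powerset.mpr (sdiff_subset_sdiff ha.1 le_rfl)
    · intro t ht
      simp only [mem_powerset] at ht
      refine mem_filter.mpr ⟨mem_powerset.mpr ?_, subset_union_left⟩
      exact union_subset h (ht.trans sdiff_subset)
    · intro a ha
      simp only [mem_filter, mem_powerset] at ha
      exact union_sdiff_of_subset ha.2
    · intro t ht
      simp only [mem_powerset] at ht
      have hd : Disjoint g'' t := by
        refine Finset.disjoint_left.mpr fun x hx hxt => ?_
        exact ((mem_sdiff.mp (ht hxt)).2) hx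
      rw [union_sdiff_cancel_left hd]
    · intro a ha
      simp only [mem_filter, mem_powerset] at ha
      rw [card_sdiff_of_subset ha.2]
  rw [key]
  have : ∑ t ∈ (g \ g'').powerset, (-1 : ℝ) ^ t.card
      = ((∑ t ∈ (g \ g'').powerset, (-1 : ℤ) ^ t.card : ℤ) : ℝ) := by push_cast; rfl
  rw [this, Finset.sum_powerset_neg_one_pow_card]
  have hiff : g \ g'' = ∅ ↔ g'' = g := by
    rw [sdiff_eq_empty_iff_subset]
    exact ⟨fun h2 => le_antisymm h h2, fun h2 => h2 ▸ le_rfl⟩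
  by_cases hc : g'' = g
  · simp [hiff.mpr hc, hc]
  · rw [if_neg (fun h2 => hc (hiff.mp h2)), if_neg hc]; simp

lemma sum_dividend (v : Network n → ℝ) (g : Network n) :
    ∑ g' ∈ g.powerset, dividend v g' = v g := by
  unfold dividend
  have step1 : ∀ g' ∈ g.powerset,
      ∑ g'' ∈ g'.powerset, (-1 : ℝ) ^ (g'.card - g''.card) * v g''
        = ∑ g'' ∈ g.powerset,
            if g'' ⊆ g' then (-1 : ℝ) ^ (g'.card - g''.card) * v g'' else 0 := by
    intro g' hg'
    rw [mem_powerset] at hg'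
    rw [← Finset.sum_filter]
    apply Finset.sum_congr _ (fun _ _ => rfl)
    ext s
    simp only [mem_powerset, mem_filter]
    exact ⟨fun hs => ⟨hs.trans hg', hs⟩, And.right⟩
  rw [Finset.sum_congr rfl step1, Finset.sum_comm]
  have step2 : ∀ g'' ∈ g.powerset,
      (∑ g' ∈ g.powerset, if g'' ⊆ g' then (-1 : ℝ) ^ (g'.card - g''.card) * v g'' else 0)
        = (if g'' = g then 1 else 0) * v g'' := by
    intro g'' hg''
    rw [mem_powerset] at hg''
    rw [← Finset.sum_filter]
    have : ∑ g' ∈ g.powerset.filter (fun g' => g'' ⊆ g'),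
        (-1 : ℝ) ^ (g'.card - g''.card) * v g''
        = (∑ g' ∈ g.powerset.filter (fun g' => g'' ⊆ g'),
            (-1 : ℝ) ^ (g'.card - g''.card)) * v g'' := by
      rw [Finset.sum_mul]
    rw [this, inner_alt g g'' hg'']
  rw [Finset.sum_congr rfl step2]
  rw [Finset.sum_eq_single g (fun b _ hb => by rw [if_neg hb, zero_mul])
    (fun hg => absurd (mem_powerset_self g) hg), if_pos rfl, one_mul]

end Aux

/-- Recursive formula for the weighted Myerson value. -/
theorem wMV_recursion (w : Fin n → ℝ) (hw : ∀ k, 0 < w k)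
    (v : Network n → ℝ) (hv : v ∅ = 0) (g : Network n) (i : Fin n)
    (hi : i ∈ players g) :
    wMV w v g i = (1 / ∑ j ∈ players g, w j) *
      (w i * (v g - v (g \ glinks g i)) +
        ∑ j ∈ (players g).erase i, w j * wMV w v (g \ glinks g j) i) := by
  classical
  set W : Network n → ℝ := fun S => ∑ j ∈ players S, w j with hWdef
  set P : Finset (Network n) := g.powerset.filter (fun g' => i ∈ players g') with hP
  have hWg : W g ≠ 0 := ne_of_gt (wsum_pos w hw hi)
  have h1 : v g - v (g \ glinks g i) = ∑ g' ∈ P, dividend v g' := by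
    rw [← sum_dividend v g, ← sum_dividend v (g \ glinks g i), powerset_sdiff_glinks,
      ← Finset.sum_filter_add_sum_filter_not g.powerset (fun g' => i ∈ players g')
        (dividend v)]
    exact add_sub_cancel_right _ _
  have h2 : ∀ j ∈ (players g).erase i, wMV w v (g \ glinks g j) i
      = ∑ g' ∈ P, if j ∉ players g'
          then (w i / W g') * dividend v g' else 0 := by
    intro j _
    unfold wMV
    have hset : (g \ glinks g j).powerset.filter (fun g' => i ∈ players g')
        = P.filter (fun g' => j ∉ players g') := by
      rw [powerset_sdiff_glinks, hP, Finset.filter_filter, Finset.filter_filter]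
      apply Finset.filter_congr
      intro x _
      tauto
    rw [hset, Finset.sum_filter]
  have h2' : ∑ j ∈ (players g).erase i, w j * wMV w v (g \ glinks g j) i
      = ∑ j ∈ (players g).erase i,
          w j * ∑ g' ∈ P, (if j ∉ players g' then (w i / W g') * dividend v g' else 0) :=
    Finset.sum_congr rfl fun j hj => by rw [h2 j hj]
  rw [h2', h1]
  have h3 : ∑ j ∈ (players g).erase i,
        w j * ∑ g' ∈ P, (if j ∉ players g' then (w i / W g') * dividend v g' else 0)
      = ∑ g' ∈ P, (w i / W g') * dividend v g' * (W g - W g') := by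
    have step : ∀ j ∈ (players g).erase i,
        w j * ∑ g' ∈ P, (if j ∉ players g' then (w i / W g') * dividend v g' else 0)
        = ∑ g' ∈ P, (if j ∉ players g'
            then w j * ((w i / W g') * dividend v g') else 0) := by
      intro j _
      rw [Finset.mul_sum]
      exact Finset.sum_congr rfl fun g' _ => by rw [mul_ite, mul_zero]
    rw [Finset.sum_congr rfl step, Finset.sum_comm]
    refine Finset.sum_congr rfl fun g' hg' => ?_
    simp only [hP, mem_filter, mem_powerset] at hg'
    have hsub : players g' ⊆ players g := players_mono hg'.1
    have hset2 : ((players g).erase i).filter (fun j => j ∉ players g')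
        = players g \ players g' := by
      ext x
      simp only [Finset.mem_filter, Finset.mem_erase, Finset.mem_sdiff]
      constructor
      · rintro ⟨⟨_, hx⟩, hnx⟩; exact ⟨hx, hnx⟩
      · rintro ⟨hx, hnx⟩
        exact ⟨⟨fun hxi => hnx (hxi ▸ hg'.2), hx⟩, hnx⟩
    calc ∑ j ∈ (players g).erase i,
          (if j ∉ players g' then w j * ((w i / W g') * dividend v g') else 0)
        = ∑ j ∈ ((players g).erase i).filter (fun j => j ∉ players g'),
            w j * ((w i / W g') * dividend v g') := by
          rw [Finset.sum_filter]
      _ = (∑ j ∈ players g \ players g', w j) * ((w i / W g') * dividend v g') := by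
          rw [hset2, Finset.sum_mul]
      _ = (w i / W g') * dividend v g' * (W g - W g') := by
          rw [Finset.sum_sdiff_eq_sub hsub]
          ring
  rw [h3]
  unfold wMV
  rw [Finset.mul_sum, ← Finset.sum_add_distrib, Finset.mul_sum, ← hP]
  refine Finset.sum_congr rfl fun g' hg' => ?_
  simp only [hP, mem_filter, mem_powerset] at hg'
  have hWg' : W g' ≠ 0 := ne_of_gt (wsum_pos w hw hg'.2)
  simp only [hWdef] at hWg hWg' ⊢
  field_simp
  ring
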